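/- arXiv:2009.12744 — 5 statements merged into one kernel-verified Lean document; each statement's English description precedes it below -/
import Mathlib

section
/- Let K be the unique positive real number satisfying K = e^{-(K+1)}. Then for every ε > 0 and every η ∈ ℝ, 0 ≤ |η| - η·tanh(η/ε) and |η| - η·tanh(η/ε) ≤ K·ε. -/
/-!
Since `tanh` is odd, `|x| - x tanh x = 2|x| / (exp (2|x|) + 1)`, which is nonnegative. For the
upper bound, `exp (t - (K + 1)) ≥ t - K` together with `exp (-(K + 1)) = K` gives
`t ≤ K (exp t + 1)` for every real `t`. The general case `ε > 0` follows by scaling `η = ε x`.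
-/

open Real

lemma mul_tanh_abs (x : ℝ) : |x| * tanh |x| = x * tanh x := by
  rcases abs_choice x with h | h <;> rw [h]
  rw [tanh_neg, neg_mul_neg]

lemma sub_mul_tanh_eq (y : ℝ) : y - y * tanh y = 2 * y / (exp (2 * y) + 1) := by
  have hcosh : 0 < exp y + exp (-y) := by positivity
  have hexp : exp (2 * y) = exp y * exp y := by rw [← exp_add, two_mul]
  rw [tanh_eq_sinh_div_cosh, sinh_eq, cosh_eq, hexp, exp_neg]
  field_simp
  ring

lemma abs_sub_mul_tanh_eq (x : ℝ) :
    |x| - x * tanh x = 2 * |x| / (exp (2 * |x|) + 1) := by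
  rw [← mul_tanh_abs, sub_mul_tanh_eq]

lemma le_mul_exp_add_one_of_eq_exp {K : ℝ} (hKfix : K = exp (-(K + 1))) (t : ℝ) :
    t ≤ K * (exp t + 1) := by
  have hshift : exp (t - (K + 1)) = K * exp t := by
    rw [sub_eq_add_neg, exp_add, ← hKfix, mul_comm]
  linarith [add_one_le_exp (t - (K + 1))]

lemma abs_sub_mul_tanh_div (ε η : ℝ) (hε : 0 < ε) :
    |η| - η * tanh (η / ε) = ε * (|η / ε| - η / ε * tanh (η / ε)) := by
  rw [abs_div, abs_of_pos hε]
  field_simp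

theorem stmt_2_general (K : ℝ) (hKfix : K = Real.exp (-(K + 1))) :
    ∀ ε : ℝ, 0 < ε → ∀ η : ℝ,
      0 ≤ |η| - η * Real.tanh (η / ε) ∧ |η| - η * Real.tanh (η / ε) ≤ K * ε := by
  intro ε hε η
  have hden : 0 < exp (2 * |η / ε|) + 1 := by positivity
  rw [abs_sub_mul_tanh_div ε η hε, abs_sub_mul_tanh_eq]
  constructor
  · positivity
  · rw [mul_comm K]
    gcongr
    rw [div_le_iff₀ hden]
    exact le_mul_exp_add_one_of_eq_exp hKfix _

/-- Standard hyperbolic-tangent approximation bound: for the positive fixed point `K`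
of `K = exp (-(K+1))`, every `ε > 0` and `η ∈ ℝ` satisfy
`0 ≤ |η| - η tanh (η/ε) ≤ K ε`. -/
theorem stmt_2 (K : ℝ) (hK : 0 < K) (hKfix : K = Real.exp (-(K + 1))) :
    ∀ ε : ℝ, 0 < ε → ∀ η : ℝ,
      0 ≤ |η| - η * Real.tanh (η / ε) ∧ |η| - η * Real.tanh (η / ε) ≤ K * ε :=
  stmt_2_general K hKfix
end

section
/- Let q ∈ ℕ, W_max > 0, β > 0, and let S : ℝ → ℝ^q and e : ℝ → ℝ be functions. Suppose Ŵ : ℝ → ℝ^q is differentiable with Ŵ(0)ᵀŴ(0) ≤ W_max, and that for every t ≥ 0: (i) if Ŵ(t)ᵀŴ(t) < W_max, or if Ŵ(t)ᵀŴ(t) ≥ W_max and e(t)·Ŵ(t)ᵀS(t) < 0, then Ŵ'(t) = β·S(t)·e(t); and (ii) if Ŵ(t)ᵀŴ(t) ≥ W_max and e(t)·Ŵ(t)ᵀS(t) ≥ 0, then Ŵ'(t) = β·S(t)·e(t) - β·(e(t)·Ŵ(t)ᵀS(t)/(Ŵ(t)ᵀŴ(t)))·Ŵ(t). Then Ŵ(t)ᵀŴ(t)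 ≤ W_max for all t ≥ 0. -/
/-!
Along the trajectory, `V t = ⟪W t, W t⟫` has derivative `2 ⟪W t, W' t⟫`. Wherever `V` exceeds
`W_max`, the law either moves along `β e S` with `e ⟪W, S⟫ < 0`, so that `V' < 0`, or removes from
`β e S` its component along `W`, so that `V' = 0`. A function that starts below a level and
cannot increase while above it never exceeds that level.
-/

open scoped RealInnerProductSpace

theorem image_le_of_deriv_nonpos_above {f f' : ℝ → ℝ} {a C : ℝ}
    (hf : ∀ x, a ≤ x → HasDerivAt f (f' x) x) (ha : f a ≤ C)
    (hdecr : ∀ x, a ≤ x → C < f x → f' x ≤ 0) :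
    ∀ x, a ≤ x → f x ≤ C := by
  intro b hab
  -- Compare `f` on `[a, b]` with the strictly increasing barrier `C + ε (x - a + 1)`.
  have barrier : ∀ ε > 0, f b ≤ C + ε * (b - a + 1) := by
    intro ε hε
    have hB : ∀ x, HasDerivAt (fun x => C + ε * (x - a + 1)) ε x := fun x => by
      simpa using (((hasDerivAt_id x).sub_const a).add_const 1).const_mul ε |>.const_add C
    refine image_le_of_deriv_right_lt_deriv_boundary (f' := f')
      (B := fun x => C + ε * (x - a + 1)) (B' := fun _ => ε)
      (fun x hx => (hf x hx.1).continuousAt.continuousWithinAt)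
      (fun x hx => (hf x hx.1).hasDerivWithinAt)
      (by simpa using ha.trans (le_add_of_nonneg_right hε.le)) hB ?_ ⟨hab, le_rfl⟩
    intro x hx hfx
    have hCf : C < f x := by rw [hfx]; nlinarith [hx.1]
    exact (hdecr x hx.1 hCf).trans_lt hε
  refine le_of_forall_pos_le_add fun δ hδ => ?_
  have hpos : 0 < b - a + 1 := by linarith
  simpa [div_mul_cancel₀ δ hpos.ne'] using barrier (δ / (b - a + 1)) (div_pos hδ hpos)

theorem real_inner_sub_div_inner_self_smul_eq_zero {E : Type*} [NormedAddCommGroup E]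
    [InnerProductSpace ℝ E] (w v : E) : ⟪w, v - (⟪w, v⟫ / ⟪w, w⟫) • w⟫ = 0 := by
  rcases eq_or_ne w 0 with rfl | hw
  · simp
  rw [inner_sub_right, real_inner_smul_right, div_mul_cancel₀ _ (inner_self_ne_zero.2 hw),
    sub_self]

theorem stmt_5_general (q : ℕ) (Wmax β : ℝ) (hβ : 0 < β)
    (S : ℝ → EuclideanSpace ℝ (Fin q)) (e : ℝ → ℝ)
    (W : ℝ → EuclideanSpace ℝ (Fin q)) (hW : Differentiable ℝ W)
    (h0 : ⟪W 0, W 0⟫ ≤ Wmax)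
    (hlaw1 : ∀ t, 0 ≤ t →
      (⟪W t, W t⟫ < Wmax ∨ (Wmax ≤ ⟪W t, W t⟫ ∧ e t * ⟪W t, S t⟫ < 0)) →
      deriv W t = (β * e t) • S t)
    (hlaw2 : ∀ t, 0 ≤ t →
      Wmax ≤ ⟪W t, W t⟫ → 0 ≤ e t * ⟪W t, S t⟫ →
      deriv W t =
        (β * e t) • S t - (β * (e t * ⟪W t, S t⟫ / ⟪W t, W t⟫)) • W t) :
    ∀ t, 0 ≤ t → ⟪W t, W t⟫ ≤ Wmax := by
  have hV : ∀ t, HasDerivAt (fun t => ⟪W t, W t⟫) (2 * ⟪W t, deriv W t⟫) t := fun t => by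
    refine ((hW t).hasDerivAt.inner ℝ (hW t).hasDerivAt).congr_deriv ?_
    rw [real_inner_comm (deriv W t)]
    ring
  refine image_le_of_deriv_nonpos_above (fun t _ => hV t) h0 fun t ht hgt => ?_
  rcases lt_or_ge (e t * ⟪W t, S t⟫) 0 with hneg | hnonneg
  · rw [hlaw1 t ht (.inr ⟨hgt.le, hneg⟩), real_inner_smul_right]
    nlinarith
  · have htangent := real_inner_sub_div_inner_self_smul_eq_zero (W t) ((β * e t) • S t)
    rw [real_inner_smul_right, mul_assoc, mul_div_assoc] at htangent
    rw [hlaw2 t ht hgt.le hnonneg, htangent, mul_zero]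

/-- The projection-based adaptive law keeps the squared norm of the neural-network
weight vector below the prescribed bound `W_max`. -/
theorem stmt_5 (q : ℕ) (Wmax β : ℝ) (hWmax : 0 < Wmax) (hβ : 0 < β)
    (S : ℝ → EuclideanSpace ℝ (Fin q)) (e : ℝ → ℝ)
    (W : ℝ → EuclideanSpace ℝ (Fin q)) (hW : Differentiable ℝ W)
    (h0 : ⟪W 0, W 0⟫ ≤ Wmax)
    (hlaw1 : ∀ t, 0 ≤ t →
      (⟪W t, W t⟫ < Wmax ∨ (Wmax ≤ ⟪W t, W t⟫ ∧ e t * ⟪W t, S t⟫ < 0)) →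
      deriv W t = (β * e t) • S t)
    (hlaw2 : ∀ t, 0 ≤ t →
      Wmax ≤ ⟪W t, W t⟫ → 0 ≤ e t * ⟪W t, S t⟫ →
      deriv W t =
        (β * e t) • S t - (β * (e t * ⟪W t, S t⟫ / ⟪W t, W t⟫)) • W t) :
    ∀ t, 0 ≤ t → ⟪W t, W t⟫ ≤ Wmax :=
  stmt_5_general q Wmax β hβ S e W hW h0 hlaw1 hlaw2
end

section
/- Let N ≥ 2 and 1 ≤ n < N. Let f₁, …, f_N : ℝ^N → ℝ be C¹ functions such that each partial gradient ∇_i f_i is globally Lipschitz with constant l̄_i > 0, and such that the pseudo-gradient P(x) = (∇₁f₁(x), …, ∇_N f_N(x)) satisfies (x - z)ᵀ(P(x) - P(z)) ≥ m‖x - z‖² for all x, z ∈ ℝ^N and some m > 0. Let x* ∈ ℝ^N satisfy P(x*) = 0. Then for every k₂ > 0, every x̄ ∈ ℝ^N, every v̄ ∈ ℝ^{N-n}, and every y₁, …, y_N ∈ ℝ^N: ⟨x̄ - x*, -k₂·(∇₁f₁(y₁), …, ∇_N f_N(y_N)) + (0_n, v̄)⟩ ≤ -k₂·m·‖x̄ -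 x*‖² + ‖x̄ - x*‖·‖v̄‖ + k₂·(max_i l̄_i)·‖x̄ - x*‖·(Σ_{i=1}^N ‖y_i - x̄‖²)^{1/2}, where (0_n, v̄) ∈ ℝ^N denotes the vector whose first n components are 0 and whose last N - n components are those of v̄, and ‖·‖ is the Euclidean norm. -/
/-!
With `d = x̄ - x*`, `P x̄ = (∇ᵢfᵢ(x̄))ᵢ` and `q = (∇ᵢfᵢ(yᵢ))ᵢ`, split
`⟪d, -k₂ q + w⟫ = -k₂ ⟪d, P x̄⟫ + k₂ ⟪d, P x̄ - q⟫ + ⟪d, w⟫`.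
Strong monotonicity against `P x* = 0` bounds the first term by `-k₂ m ‖d‖²`, Cauchy–Schwarz
bounds the other two, and the Lipschitz bounds give `‖P x̄ - q‖ ≤ L (Σᵢ ‖yᵢ - x̄‖²)^{1/2}`
coordinatewise.
-/

open Finset RealInnerProductSpace

section

variable {ι : Type*} [Fintype ι]

lemma EuclideanSpace.real_inner_eq_sum_mul (x y : EuclideanSpace ℝ ι) :
    ⟪x, y⟫ = ∑ i, x i * y i := by
  simp [PiLp.inner_apply, mul_comm]

lemma EuclideanSpace.norm_le_mul_norm_of_forall_abs_le {x y : EuclideanSpace ℝ ι} {c : ℝ}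
    (hc : 0 ≤ c) (h : ∀ i, |x i| ≤ c * |y i|) : ‖x‖ ≤ c * ‖y‖ := by
  have hsq : ‖x‖ ^ 2 ≤ (c * ‖y‖) ^ 2 := by
    simp only [mul_pow, EuclideanSpace.real_norm_sq_eq, mul_sum]
    refine sum_le_sum fun i _ => ?_
    rw [← sq_abs, ← sq_abs (y i), ← mul_pow]
    exact pow_le_pow_left₀ (abs_nonneg _) (h i) 2
  exact (pow_le_pow_iff_left₀ (norm_nonneg _) (by positivity) two_ne_zero).1 hsq

end

lemma inner_neg_smul_add_le {E : Type*} [NormedAddCommGroup E] [InnerProductSpace ℝ E]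
    {d p q w : E} {k m : ℝ} (hk : 0 ≤ k) (hmono : m * ‖d‖ ^ 2 ≤ ⟪d, p⟫) :
    ⟪d, -k • q + w⟫ ≤ -(k * m) * ‖d‖ ^ 2 + ‖d‖ * ‖w‖ + k * ‖d‖ * ‖p - q‖ := by
  have hsplit : ⟪d, -k • q + w⟫ = -k * ⟪d, p⟫ + k * ⟪d, p - q⟫ + ⟪d, w⟫ := by
    simp only [inner_add_right, inner_smul_right, inner_sub_right]
    ring
  have hw := real_inner_le_norm d w
  have hpq := mul_le_mul_of_nonneg_left (real_inner_le_norm d (p - q)) hk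
  have hp := mul_le_mul_of_nonneg_left hmono hk
  rw [hsplit]
  linarith

theorem stmt_8_general (N n : ℕ)
    (pg : Fin N → EuclideanSpace ℝ (Fin N) → ℝ)
    (lbar : Fin N → ℝ) (hlbar : ∀ i, 0 < lbar i)
    (hLip : ∀ i x y, |pg i x - pg i y| ≤ lbar i * ‖x - y‖)
    (L : ℝ) (hL : IsGreatest (Set.range lbar) L)
    (m : ℝ)
    (hmono : ∀ x z : EuclideanSpace ℝ (Fin N),
      m * ‖x - z‖ ^ 2 ≤ ∑ i, (x i - z i) * (pg i x - pg i z))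
    (xstar : EuclideanSpace ℝ (Fin N)) (hstar : ∀ i, pg i xstar = 0) :
    ∀ k2 : ℝ, 0 < k2 →
      ∀ (xbar : EuclideanSpace ℝ (Fin N)) (w : EuclideanSpace ℝ (Fin N)),
        (∀ i : Fin N, (i : ℕ) < n → w i = 0) →
        ∀ y : Fin N → EuclideanSpace ℝ (Fin N),
          ∑ i, (xbar i - xstar i) * (-k2 * pg i (y i) + w i) ≤
            -(k2 * m) * ‖xbar - xstar‖ ^ 2 + ‖xbar - xstar‖ * ‖w‖ +
              k2 * L * ‖xbar - xstar‖ * Real.sqrt (∑ i, ‖y i - xbar‖ ^ 2) := by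
  intro k2 hk2 xbar w _ y
  let p : EuclideanSpace ℝ (Fin N) := WithLp.toLp 2 fun i => pg i xbar
  let q : EuclideanSpace ℝ (Fin N) := WithLp.toLp 2 fun i => pg i (y i)
  have hL_nonneg : 0 ≤ L := by
    obtain ⟨j, rfl⟩ := hL.1
    exact (hlbar j).le
  have hmono_xstar : m * ‖xbar - xstar‖ ^ 2 ≤ ⟪xbar - xstar, p⟫ := by
    simpa [EuclideanSpace.real_inner_eq_sum_mul, p, hstar] using hmono xbar xstar
  have hpq : ‖p - q‖ ≤ L * √(∑ i, ‖y i - xbar‖ ^ 2) := calc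
    ‖p - q‖ ≤ L * ‖(WithLp.toLp 2 fun i => ‖y i - xbar‖ : EuclideanSpace ℝ (Fin N))‖ := by
      refine EuclideanSpace.norm_le_mul_norm_of_forall_abs_le hL_nonneg fun i => ?_
      simpa [p, q, norm_sub_rev] using (hLip i xbar (y i)).trans
        (mul_le_mul_of_nonneg_right (hL.2 ⟨i, rfl⟩) (norm_nonneg _))
    _ = L * √(∑ i, ‖y i - xbar‖ ^ 2) := by simp [EuclideanSpace.norm_eq]
  calc ∑ i, (xbar i - xstar i) * (-k2 * pg i (y i) + w i)
      = ⟪xbar - xstar, -k2 • q + w⟫ := by simp [EuclideanSpace.real_inner_eq_sum_mul, q]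
    _ ≤ -(k2 * m) * ‖xbar - xstar‖ ^ 2 + ‖xbar - xstar‖ * ‖w‖ +
          k2 * ‖xbar - xstar‖ * ‖p - q‖ := inner_neg_smul_add_le hk2.le hmono_xstar
    _ ≤ _ := by
      have := mul_le_mul_of_nonneg_left hpq (mul_nonneg hk2.le (norm_nonneg (xbar - xstar)))
      linarith

/-- Static inequality bounding the derivative of the Lyapunov term
`V₁ = (1/2)‖x̄ - x*‖²` along the Nash equilibrium seeking dynamics: for a strongly
monotone pseudo-gradient with modulus `m` and Lipschitz partial gradients,
`⟨x̄ - x*, -k₂ (∇ᵢfᵢ(yᵢ))ᵢ + (0ₙ, v̄)⟩ ≤ -k₂ m ‖x̄ - x*‖² + ‖x̄ - x*‖ ‖v̄‖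
  + k₂ (maxᵢ l̄ᵢ) ‖x̄ - x*‖ (Σᵢ ‖yᵢ - x̄‖²)^{1/2}`.
Here `w` is the vector `(0ₙ, v̄) ∈ ℝᴺ` whose first `n` components vanish. -/
theorem stmt_8 (N n : ℕ) (hN : 2 ≤ N) (hn1 : 1 ≤ n) (hnN : n < N)
    (f : Fin N → EuclideanSpace ℝ (Fin N) → ℝ)
    (hf : ∀ i, ContDiff ℝ 1 (f i))
    (pg : Fin N → EuclideanSpace ℝ (Fin N) → ℝ)
    (hpg : ∀ i x, pg i x = fderiv ℝ (f i) x (EuclideanSpace.single i 1))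
    (lbar : Fin N → ℝ) (hlbar : ∀ i, 0 < lbar i)
    (hLip : ∀ i x y, |pg i x - pg i y| ≤ lbar i * ‖x - y‖)
    (L : ℝ) (hL : IsGreatest (Set.range lbar) L)
    (m : ℝ) (hm : 0 < m)
    (hmono : ∀ x z : EuclideanSpace ℝ (Fin N),
      m * ‖x - z‖ ^ 2 ≤ ∑ i, (x i - z i) * (pg i x - pg i z))
    (xstar : EuclideanSpace ℝ (Fin N)) (hstar : ∀ i, pg i xstar = 0) :
    ∀ k2 : ℝ, 0 < k2 →
      ∀ (xbar : EuclideanSpace ℝ (Fin N)) (w : EuclideanSpace ℝ (Fin N)),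
        (∀ i : Fin N, (i : ℕ) < n → w i = 0) →
        ∀ y : Fin N → EuclideanSpace ℝ (Fin N),
          ∑ i, (xbar i - xstar i) * (-k2 * pg i (y i) + w i) ≤
            -(k2 * m) * ‖xbar - xstar‖ ^ 2 + ‖xbar - xstar‖ * ‖w‖ +
              k2 * L * ‖xbar - xstar‖ * Real.sqrt (∑ i, ‖y i - xbar‖ ^ 2) :=
  stmt_8_general N n pg lbar hlbar hLip L hL m hmono xstar hstar
end

section
/- Let V : ℝ → ℝ be differentiable with V(t) ≥ 0 for all t ≥ 0, and let a > 0 and c ≥ 0. Suppose that for every t ≥ 0, V(t) ≥ c implies V'(t) ≤ -a·V(t). Then V(t) ≤ max(V(0), c) for all t ≥ 0. -/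
open Filter Topology

theorem le_of_deriv_nonpos_of_le {f : ℝ → ℝ} (hf : Differentiable ℝ f) {a M : ℝ} (ha : f a ≤ M)
    (hM : ∀ x, a ≤ x → M ≤ f x → deriv f x ≤ 0) {x : ℝ} (hx : a ≤ x) : f x ≤ M := by
  -- `f` can only meet the tilted barrier `M + ε (y - a)` where `f' ≤ 0 < ε`, so it stays below it.
  have fence : ∀ ε > 0, f x ≤ M + ε * (x - a) := fun ε hε =>
    image_le_of_deriv_right_lt_deriv_boundary' (B := fun y => M + ε * (y - a))
      hf.continuous.continuousOn (fun y _ => (hf y).hasDerivAt.hasDerivWithinAt)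
      (by simpa using ha) (by fun_prop)
      (fun y _ => (((hasDerivAt_id y).sub_const a).const_mul ε).const_add M |>.hasDerivWithinAt)
      (fun y hy hfy => by
        have hMy : M ≤ f y := by
          rw [hfy]
          exact le_add_of_nonneg_right (mul_nonneg hε.le (sub_nonneg.2 hy.1))
        simpa using (hM y hy.1 hMy).trans_lt hε)
      ⟨hx, le_rfl⟩
  have hlim : Tendsto (fun ε => M + ε * (x - a)) (𝓝[>] 0) (𝓝 M) := by
    have : Continuous fun ε : ℝ => M + ε * (x - a) := by fun_prop
    exact (this.tendsto' 0 M (by simp)).mono_left nhdsWithin_le_nhds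
  exact ge_of_tendsto hlim (eventually_nhdsWithin_of_forall fence)

theorem stmt_9_general (V : ℝ → ℝ) (hV : Differentiable ℝ V)
    (a c : ℝ) (ha : 0 < a) (hc : 0 ≤ c)
    (hd : ∀ t, 0 ≤ t → c ≤ V t → deriv V t ≤ -a * V t) :
    ∀ t, 0 ≤ t → V t ≤ max (V 0) c := by
  refine fun t ht => le_of_deriv_nonpos_of_le hV (le_max_left _ _) (fun x hx hMx => ?_) ht
  have hcx : c ≤ V x := (le_max_right _ _).trans hMx
  have hdecay : 0 ≤ a * V x := mul_nonneg ha.le (hc.trans hcx)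
  linarith [hd x hx hcx]

/-- Ultimate-boundedness principle: a nonnegative differentiable function which decays
at rate `-a V` whenever it exceeds the threshold `c` never exceeds `max (V 0) c`. -/
theorem stmt_9 (V : ℝ → ℝ) (hV : Differentiable ℝ V)
    (hpos : ∀ t, 0 ≤ t → 0 ≤ V t) (a c : ℝ) (ha : 0 < a) (hc : 0 ≤ c)
    (hd : ∀ t, 0 ≤ t → c ≤ V t → deriv V t ≤ -a * V t) :
    ∀ t, 0 ≤ t → V t ≤ max (V 0) c :=
  stmt_9_general V hV a c ha hc hd
end

section
/- Let N ≥ 2 and let G be a connected simple (undirected) graph on the vertex set {1, …, N}, with adjacency matrix A = [a_{ij}] (a_{ij} = 1 if {i,j} is an edge and a_{ij} = 0 otherwise, a_{ii} = 0) and Laplacian matrix L = D - A, where D is the diagonal matrix with D_{ii} = Σ_j a_{ij}. Let A₀ be the N²×N² diagonal matrix whose diagonal entries are a_{11}, a_{12}, …, a_{1N}, a_{21}, …, a_{NN} in this order, and let I_N be the N×N identity matrix. Then the matrix L ⊗ I_N + A₀ (where ⊗ is the Kronecker product) is symmetric positive definite. -/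
/-!
Both summands are positive semidefinite, so the sum is positive definite as soon as no nonzero
`x` lies in both kernels. If `(L ⊗ I) x = 0`, every column `k ↦ x (k, j)` lies in the kernel of
the Laplacian of a connected graph, hence is constant. If `A₀ x = 0`, then `x (k, j) = 0` for
every edge `{j, k}`, and since `N ≥ 2` every vertex `j` has a neighbour, so each column vanishes.
-/

open Kronecker Matrix
open scoped ComplexOrder

namespace Matrix

variable {m n : Type*} [Fintype n]

theorem PosSemidef.posDef_add_of_mulVec_eq_zero {𝕜 : Type*} [RCLike 𝕜] {A B : Matrix n n 𝕜}
    (hA : A.PosSemidef) (hB : B.PosSemidef) (hker : ∀ x, A *ᵥ x = 0 → B *ᵥ x = 0 → x = 0) :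
    (A + B).PosDef := by
  refine posDef_iff_dotProduct_mulVec.mpr ⟨hA.isHermitian.add hB.isHermitian, fun x hx => ?_⟩
  have hAx := hA.dotProduct_mulVec_nonneg x
  have hBx := hB.dotProduct_mulVec_nonneg x
  rw [add_mulVec, dotProduct_add]
  refine (add_nonneg hAx hBx).lt_of_ne fun hsum => ?_
  have hzero := (add_eq_zero_iff_of_nonneg hAx hBx).mp hsum.symm
  refine hx (hker x ?_ ?_)
  · exact (hA.dotProduct_mulVec_zero_iff x).mp hzero.1
  · exact (hB.dotProduct_mulVec_zero_iff x).mp hzero.2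

theorem kronecker_one_mulVec_eq_zero_iff {R : Type*} [Fintype m] [DecidableEq n] [Semiring R]
    {L : Matrix m m R} {x : m × n → R} :
    (L ⊗ₖ (1 : Matrix n n R)) *ᵥ x = 0 ↔ ∀ j, L *ᵥ (fun i => x (i, j)) = 0 := by
  have hslice (i : m) (j : n) :
      ((L ⊗ₖ (1 : Matrix n n R)) *ᵥ x) (i, j) = (L *ᵥ fun k => x (k, j)) i := by
    simp [mulVec, dotProduct, Fintype.sum_prod_type, one_apply]
  simp only [funext_iff, Prod.forall, hslice, Pi.zero_apply]
  exact forall_comm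

end Matrix

theorem SimpleGraph.Connected.lapMatrix_mulVec_eq_zero_iff {V : Type*} [Fintype V]
    [DecidableEq V] {G : SimpleGraph V} [DecidableRel G.Adj] (hG : G.Connected) {x : V → ℝ} :
    G.lapMatrix ℝ *ᵥ x = 0 ↔ ∀ i j, x i = x j := by
  rw [lapMatrix_mulVec_eq_zero_iff_forall_reachable]
  exact forall₂_congr fun i j => ⟨fun h => h (hG i j), fun h _ => h⟩

theorem SimpleGraph.adjMatrix_nonneg {V : Type*} (G : SimpleGraph V) [DecidableRel G.Adj]
    (i j : V) : 0 ≤ G.adjMatrix ℝ i j := by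
  rw [adjMatrix_apply]; split_ifs <;> norm_num

/-- For a connected simple graph `G` on `N ≥ 2` vertices with Laplacian `L` and
adjacency matrix `A`, the matrix `L ⊗ I_N + A₀` is symmetric positive definite, where
`A₀` is the `N²×N²` diagonal matrix with diagonal entries `a_{ij}` stacked row by row. -/
theorem stmt_10 (N : ℕ) (hN : 2 ≤ N) (G : SimpleGraph (Fin N))
    [DecidableRel G.Adj] (hG : G.Connected) :
    (G.lapMatrix ℝ ⊗ₖ (1 : Matrix (Fin N) (Fin N) ℝ) +
      Matrix.diagonal (fun p : Fin N × Fin N => G.adjMatrix ℝ p.1 p.2)).PosDef := by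
  have : Nontrivial (Fin N) := Fin.nontrivial_iff_two_le.mpr hN
  have hLI := (G.posSemidef_lapMatrix ℝ).kronecker (PosDef.one (n := Fin N)).posSemidef
  refine hLI.posDef_add_of_mulVec_eq_zero
    (posSemidef_diagonal_iff.mpr fun p => G.adjMatrix_nonneg p.1 p.2) fun x hL hA => ?_
  funext ⟨i, j⟩
  have hcol : ∀ k, x (k, j) = x (i, j) := fun k =>
    hG.lapMatrix_mulVec_eq_zero_iff.mp (kronecker_one_mulVec_eq_zero_iff.mp hL j) k i
  obtain ⟨k, hjk⟩ := hG.preconnected.exists_adj_of_nontrivial j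
  have hxkj := congrFun hA (k, j)
  rw [mulVec_diagonal, SimpleGraph.adjMatrix_apply, if_pos hjk.symm, one_mul] at hxkj
  exact (hcol k).symm.trans hxkj
end
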